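/- With the same notation, if -log L_r(λ) > 1 and r ↦ -log L_r(λ) and λ ↦ -log L_r(λ) are nondecreasing, then L_{2r}(2λ) ≤ exp( -r φ( 2(1 - e^{-1}) λ ) ). -/

import Mathlib

/-!
Since `κ' = 2λ - ψ(κ)`, along `s ↦ κ_s(2λ)` one has `d/ds (-log L_s(2λ)) = ψ'(κ_s(2λ))`; and
`κ_s(2λ) ≥ 0`, because `κ' = 2λ > 0` wherever `κ = 0`. For `s ∈ [r, 2r]` monotonicity gives
`-log L_s(2λ) ≥ -log L_r(λ) > 1`, i.e. `ψ(κ_s(2λ)) > 2(1 - e⁻¹)λ`. The Lévy–Khintchine form makes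
`ψ` convex with `ψ(0) = 0`, so `κ_s(2λ) > ψ⁻¹(2(1 - e⁻¹)λ)` and, `ψ'` being nondecreasing,
integrating the derivative over `[r, 2r]` gives `-log L_{2r}(2λ) ≥ r φ(2(1 - e⁻¹)λ)`.
-/

open MeasureTheory Real Set

section LevyKhintchine

lemma exp_neg_sub_one_add_nonneg (x : ℝ) : 0 ≤ exp (-x) - 1 + x := by
  linarith [add_one_le_exp (-x)]

lemma exp_neg_sub_one_add_le_min {x : ℝ} (hx : 0 ≤ x) : exp (-x) - 1 + x ≤ min x (x ^ 2) := by
  have hexp_le : exp (-x) ≤ 1 := exp_le_one_iff.2 (by linarith)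
  have hmul_le : (1 + x) * exp (-x) ≤ 1 := by
    calc (1 + x) * exp (-x) ≤ exp x * exp (-x) := by
          gcongr; linarith [add_one_le_exp x]
      _ = 1 := by rw [← exp_add, add_neg_cancel, exp_zero]
  exact le_min (by linarith) (by nlinarith [exp_pos (-x)])

lemma exp_neg_mul_sub_one_add_mul_le {l r : ℝ} (hl : 0 ≤ l) (hr : 0 < r) :
    exp (-(l * r)) - 1 + l * r ≤ max l (l ^ 2) * min r (r ^ 2) := by
  have h := exp_neg_sub_one_add_le_min (mul_nonneg hl hr.le)
  rcases le_total r 1 with hr1 | hr1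
  · rw [min_eq_right (by nlinarith : r ^ 2 ≤ r)]
    nlinarith [min_le_right (l * r) ((l * r) ^ 2), le_max_right l (l ^ 2)]
  · rw [min_eq_left (by nlinarith : r ≤ r ^ 2)]
    nlinarith [min_le_left (l * r) ((l * r) ^ 2), le_max_left l (l ^ 2)]

variable {ν : Measure ℝ}

lemma integrable_exp_neg_mul_sub_one_add_mul (hν0 : ν (Iic 0) = 0)
    (hνint : Integrable (fun r => min r (r ^ 2)) ν) {l : ℝ} (hl : 0 ≤ l) :
    Integrable (fun r => exp (-(l * r)) - 1 + l * r) ν := by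
  have hpos : ∀ᵐ r ∂ν, 0 < r := by
    rw [ae_iff]
    simp only [not_lt]
    exact hν0
  refine (hνint.const_mul (max l (l ^ 2))).mono'
    (Continuous.aestronglyMeasurable (by fun_prop)) ?_
  filter_upwards [hpos] with r hr
  rw [norm_of_nonneg (exp_neg_sub_one_add_nonneg _)]
  exact exp_neg_mul_sub_one_add_mul_le hl hr

lemma convexOn_exp_neg_mul_sub_one_add_mul (r : ℝ) :
    ConvexOn ℝ univ fun l => exp (-(l * r)) - 1 + l * r := by
  refine ⟨convex_univ, fun x _ y _ a b ha hb hab => ?_⟩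
  have hexp := convexOn_exp.2 (mem_univ (-(x * r))) (mem_univ (-(y * r))) ha hb hab
  simp only [smul_eq_mul] at hexp ⊢
  have hlin : a * -(x * r) + b * -(y * r) = -((a * x + b * y) * r) := by ring
  rw [hlin] at hexp
  nlinarith

lemma convexOn_levyKhintchine (α : ℝ) {β : ℝ} (hβ : 0 ≤ β) (hν0 : ν (Iic 0) = 0)
    (hνint : Integrable (fun r => min r (r ^ 2)) ν) :
    ConvexOn ℝ (Ici 0)
      fun l => α * l + β * l ^ 2 + ∫ r, (exp (-(l * r)) - 1 + l * r) ∂ν := by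
  have hlin : ConvexOn ℝ (Ici 0) fun l : ℝ => α * l :=
    (LinearMap.mulLeft ℝ α).convexOn (convex_Ici 0)
  have hsq : ConvexOn ℝ (Ici 0) fun l : ℝ => β * l ^ 2 := (convexOn_pow 2).smul hβ
  have hint := integral_convexOn_of_integrand_ae (μ := ν) (convex_Ici 0)
    (ae_of_all _ fun r => (convexOn_exp_neg_mul_sub_one_add_mul r).subset (subset_univ _)
      (convex_Ici 0))
    fun l hl => integrable_exp_neg_mul_sub_one_add_mul hν0 hνint hl
  exact (hlin.add hsq).add hint

end LevyKhintchine

lemma nonneg_of_hasDerivAt_pos_of_eq_zero {f f' : ℝ → ℝ} (h0 : 0 ≤ f 0)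
    (hf : ∀ s, 0 ≤ s → HasDerivAt f (f' s) s) (hpos : ∀ s, 0 ≤ s → f s = 0 → 0 < f' s)
    {s : ℝ} (hs : 0 ≤ s) : 0 ≤ f s :=
  image_le_of_deriv_right_lt_deriv_boundary' (f' := fun _ => 0) continuousOn_const
    (fun x _ => hasDerivWithinAt_const x _ 0) h0
    (fun x hx => (hf x hx.1).continuousAt.continuousWithinAt)
    (fun x hx => (hf x hx.1).hasDerivWithinAt) (fun x hx hx0 => hpos x hx.1 hx0.symm)
    ⟨hs, le_rfl⟩

lemma lt_of_one_lt_neg_log_one_sub_div {ψ : ℝ → ℝ} (hψ : ConvexOn ℝ (Ici 0) ψ) (hψ0 : ψ 0 = 0)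
    {m a k : ℝ} (hm : 0 < m) (ha : ψ a = (1 - exp (-1)) * m) (hk : 0 ≤ k)
    (h : 1 < -log (1 - ψ k / m)) : a < k := by
  have hL : 1 - ψ k / m < exp (-1) := (le_exp_log _).trans_lt (exp_lt_exp.2 (by linarith))
  have hψk : (1 - exp (-1)) * m < ψ k := by
    rw [← lt_div_iff₀ hm]; linarith
  have hc : 0 ≤ (1 - exp (-1)) * m := by
    have := exp_lt_one_iff.2 (neg_one_lt_zero (R := ℝ)); positivity
  by_contra! hka
  have hseg : k ∈ segment ℝ 0 a := by rw [segment_eq_Icc (hk.trans hka)]; exact ⟨hk, hka⟩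
  have := hψ.le_on_segment self_mem_Ici (mem_Ici.2 (hk.trans hka)) hseg
  rw [hψ0, ha, max_eq_right hc] at this
  linarith

lemma hasDerivAt_neg_log_one_sub_div {ψ ψ' k : ℝ → ℝ} {m s : ℝ} (hm : m ≠ 0)
    (hψ : HasDerivAt ψ (ψ' (k s)) (k s)) (hk : HasDerivAt k (m - ψ (k s)) s)
    (hL : 1 - ψ (k s) / m ≠ 0) :
    HasDerivAt (fun t => -log (1 - ψ (k t) / m)) (ψ' (k s)) s := by
  have hL' : m - ψ (k s) ≠ 0 := by
    rw [one_sub_div hm] at hL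
    exact (div_ne_zero_iff.1 hL).1
  refine ((((hψ.comp s hk).div_const m).const_sub 1).log hL).fun_neg.congr_deriv ?_
  simp only [Function.comp_apply, one_sub_div hm]
  field_simp

lemma ConvexOn.monotoneOn_of_hasDerivAt {ψ ψ' : ℝ → ℝ} (hψ : ConvexOn ℝ (Ici 0) ψ)
    (hderiv : ∀ x, 0 < x → HasDerivAt ψ (ψ' x) x) : MonotoneOn ψ' (Ioi 0) := by
  intro x hx y hy hxy
  rw [← (hderiv x hx).deriv, ← (hderiv y hy).deriv]
  exact (hψ.subset Ioi_subset_Ici_self (convex_Ioi 0)).monotoneOn_deriv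
    (fun z hz => (hderiv z hz).differentiableAt) hx hy hxy

lemma le_exp_neg_mul_of_le_hasDerivAt {u g : ℝ → ℝ} {a b A : ℝ} (hab : a ≤ b)
    (ha : 0 ≤ -log (u a)) (hderiv : ∀ s ∈ Icc a b, HasDerivAt (fun t => -log (u t)) (g s) s)
    (hA : ∀ s ∈ Icc a b, A ≤ g s) : u b ≤ exp (-(A * (b - a))) := by
  have hgrowth : A * (b - a) ≤ -log (u b) - -log (u a) :=
    (convex_Icc a b).mul_sub_le_image_sub_of_le_deriv
      (fun s hs => (hderiv s hs).continuousAt.continuousWithinAt)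
      (fun s hs => (hderiv s (interior_subset hs)).differentiableAt.differentiableWithinAt)
      (fun s hs => (hderiv s (interior_subset hs)).deriv ▸ hA s (interior_subset hs))
      a (left_mem_Icc.2 hab) b (right_mem_Icc.2 hab) hab
  calc u b ≤ exp (log (u b)) := le_exp_log _
    _ ≤ exp (-(A * (b - a))) := exp_le_exp.2 (by linarith)

theorem claim2_large_L_general (α β : ℝ) (hβ : 0 ≤ β)
    (ν : Measure ℝ) (hν0 : ν (Set.Iic 0) = 0)
    (hνint : Integrable (fun r => min r (r ^ 2)) ν)
    (ψ ψ' ψinv : ℝ → ℝ) (κ : ℝ → ℝ → ℝ)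
    (hψ : ∀ l : ℝ, 0 ≤ l →
      ψ l = α * l + β * l ^ 2 + ∫ r, (Real.exp (-(l * r)) - 1 + l * r) ∂ν)
    (hderiv : ∀ l : ℝ, 0 < l → HasDerivAt ψ (ψ' l) l)
    (hinvpos : ∀ l : ℝ, 0 < l → 0 < ψinv l)
    (hinv₁ : ∀ l : ℝ, 0 ≤ l → ψ (ψinv l) = l)
    (hκ0 : ∀ l : ℝ, 0 < l → κ 0 l = 0)
    (hκ : ∀ l : ℝ, 0 < l → ∀ r : ℝ, 0 ≤ r →
      HasDerivAt (fun s => κ s l) (l - ψ (κ r l)) r)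
    -- monotonicity of -log L_r(λ) in r and in λ
    (hmono_r : ∀ l : ℝ, 0 < l →
      MonotoneOn (fun r => -Real.log (1 - ψ (κ r l) / l)) (Set.Ici 0))
    (hmono_l : ∀ r : ℝ, 0 ≤ r →
      MonotoneOn (fun l => -Real.log (1 - ψ (κ r l) / l)) (Set.Ioi 0)) :
    ∀ r l : ℝ, 0 < r → 0 < l →
      1 < -Real.log (1 - ψ (κ r l) / l) →
      1 - ψ (κ (2 * r) (2 * l)) / (2 * l) ≤
        Real.exp (-(r * ψ' (ψinv (2 * (1 - Real.exp (-1)) * l)))) := by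
  intro r l hr hl h1
  have hm : 0 < 2 * l := by positivity
  have hc : 0 < 2 * (1 - exp (-1)) * l := by
    have := exp_lt_one_iff.2 (neg_one_lt_zero (R := ℝ)); nlinarith
  set a := ψinv (2 * (1 - exp (-1)) * l)
  have ha_pos : 0 < a := hinvpos _ hc
  have hψ_convex : ConvexOn ℝ (Ici 0) ψ :=
    (convexOn_levyKhintchine α hβ hν0 hνint).congr fun x hx => (hψ x hx).symm
  have hψ0 : ψ 0 = 0 := by simp [hψ 0 le_rfl]
  have hκ_nonneg : ∀ s, 0 ≤ s → 0 ≤ κ s (2 * l) := fun s hs =>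
    nonneg_of_hasDerivAt_pos_of_eq_zero (hκ0 _ hm).ge (hκ _ hm)
      (fun t _ ht => by simpa [ht, hψ0] using hm) hs
  have hlog_gt : ∀ s ∈ Icc r (2 * r), 1 < -log (1 - ψ (κ s (2 * l)) / (2 * l)) := fun s hs =>
    h1.trans_le <| (hmono_l r hr.le hl hm (by linarith)).trans
      (hmono_r _ hm hr.le (hr.le.trans hs.1) hs.1)
  have ha_lt : ∀ s ∈ Icc r (2 * r), a < κ s (2 * l) := fun s hs =>
    lt_of_one_lt_neg_log_one_sub_div hψ_convex hψ0 hm (by rw [hinv₁ _ hc.le]; ring)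
      (hκ_nonneg s (hr.le.trans hs.1)) (hlog_gt s hs)
  have hlog_deriv : ∀ s ∈ Icc r (2 * r), HasDerivAt
      (fun t => -log (1 - ψ (κ t (2 * l)) / (2 * l))) (ψ' (κ s (2 * l))) s := fun s hs =>
    hasDerivAt_neg_log_one_sub_div hm.ne' (hderiv _ (ha_pos.trans (ha_lt s hs)))
      (hκ _ hm s (hr.le.trans hs.1)) fun h => absurd (hlog_gt s hs) (by norm_num [h])
  have hψ'_le : ∀ s ∈ Icc r (2 * r), ψ' a ≤ ψ' (κ s (2 * l)) := fun s hs =>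
    hψ_convex.monotoneOn_of_hasDerivAt hderiv ha_pos (ha_pos.trans (ha_lt s hs)) (ha_lt s hs).le
  calc 1 - ψ (κ (2 * r) (2 * l)) / (2 * l) ≤ exp (-(ψ' a * (2 * r - r))) :=
        le_exp_neg_mul_of_le_hasDerivAt (u := fun s => 1 - ψ (κ s (2 * l)) / (2 * l))
          (by linarith)
          (zero_le_one.trans (hlog_gt r ⟨le_rfl, by linarith⟩).le) hlog_deriv hψ'_le
    _ = exp (-(r * ψ' a)) := by ring_nf

/-- With L_r(λ) = 1 - ψ(κ_r(λ,0))/λ, if -log L_r(λ) > 1 and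
-log L is nondecreasing in each variable, then
L_{2r}(2λ) ≤ exp(-r φ(2(1-e⁻¹)λ)) where φ = ψ' ∘ ψ⁻¹. -/
theorem claim2_large_L (α β : ℝ) (hα : 0 ≤ α) (hβ : 0 ≤ β)
    (ν : Measure ℝ) (hν0 : ν (Set.Iic 0) = 0)
    (hνint : Integrable (fun r => min r (r ^ 2)) ν)
    (ψ ψ' ψinv : ℝ → ℝ) (κ : ℝ → ℝ → ℝ)
    (hψ : ∀ l : ℝ, 0 ≤ l →
      ψ l = α * l + β * l ^ 2 + ∫ r, (Real.exp (-(l * r)) - 1 + l * r) ∂ν)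
    (hext : IntegrableOn (fun u => 1 / ψ u) (Set.Ioi 1))
    (hderiv : ∀ l : ℝ, 0 < l → HasDerivAt ψ (ψ' l) l)
    (hinvpos : ∀ l : ℝ, 0 < l → 0 < ψinv l)
    (hinv₁ : ∀ l : ℝ, 0 ≤ l → ψ (ψinv l) = l)
    (hinv₂ : ∀ l : ℝ, 0 ≤ l → ψinv (ψ l) = l)
    (hκ0 : ∀ l : ℝ, 0 < l → κ 0 l = 0)
    (hκ : ∀ l : ℝ, 0 < l → ∀ r : ℝ, 0 ≤ r →
      HasDerivAt (fun s => κ s l) (l - ψ (κ r l)) r)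
    -- monotonicity of -log L_r(λ) in r and in λ
    (hmono_r : ∀ l : ℝ, 0 < l →
      MonotoneOn (fun r => -Real.log (1 - ψ (κ r l) / l)) (Set.Ici 0))
    (hmono_l : ∀ r : ℝ, 0 ≤ r →
      MonotoneOn (fun l => -Real.log (1 - ψ (κ r l) / l)) (Set.Ioi 0)) :
    ∀ r l : ℝ, 0 < r → 0 < l →
      1 < -Real.log (1 - ψ (κ r l) / l) →
      1 - ψ (κ (2 * r) (2 * l)) / (2 * l) ≤
        Real.exp (-(r * ψ' (ψinv (2 * (1 - Real.exp (-1)) * l)))) :=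
  claim2_large_L_general α β hβ ν hν0 hνint ψ ψ' ψinv κ hψ hderiv hinvpos hinv₁ hκ0 hκ hmono_r
    hmono_l
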